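/- arXiv:2205.15664 — 3 statements merged into one kernel-verified Lean document; each statement's English description precedes it below -/
import Mathlib

section
/- For all vectors a, b in ℝ^N and p ≥ 2, one has (4/p²)·| |a|^((p-2)/2)·a − |b|^((p-2)/2)·b |² ≤ ⟨|a|^(p-2)·a − |b|^(p-2)·b, a − b⟩. -/
/-!
Write `s = p / 2`, `u = ‖a‖ ^ (s - 1)`, `v = ‖b‖ ^ (s - 1)` and assume `‖b‖ ≤ ‖a‖`. Both sides are
affine in `⟪a, b⟫ ≤ ‖a‖ ‖b‖`, and since `2 u v ≤ u ^ 2 + v ^ 2` the inequality only gets harder as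
`⟪a, b⟫` grows. At `⟪a, b⟫ = ‖a‖ ‖b‖` it is the scalar inequality
`(x ^ s - y ^ s) ^ 2 ≤ s ^ 2 (x - y) (x ^ (2 s - 1) - y ^ (2 s - 1))` for `0 ≤ y ≤ x`, which follows
from the tangent-line bound `x ^ s - y ^ s ≤ s x ^ (s - 1) (x - y)` of the convex map `t ↦ t ^ s`.
-/

open Real RealInnerProductSpace

lemma Real.rpow_sub_rpow_le_mul_rpow_sub_one {s x y : ℝ} (hs : 1 ≤ s) (hy : 0 ≤ y)
    (hyx : y ≤ x) : x ^ s - y ^ s ≤ s * x ^ (s - 1) * (x - y) := by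
  rcases (hy.trans hyx).eq_or_lt with rfl | hx
  · obtain rfl : y = 0 := le_antisymm hyx hy
    simp
  have hbern : 1 + s * (y / x - 1) ≤ (y / x) ^ s := by
    simpa using one_add_mul_self_le_rpow_one_add (s := y / x - 1)
      (by linarith [div_nonneg hy hx.le]) hs
  have hxs : x ^ s = x ^ (s - 1) * x := by
    rw [← rpow_add_one hx.ne', sub_add_cancel]
  rw [div_rpow hy hx.le, le_div_iff₀ (rpow_pos_of_pos hx s)] at hbern
  rw [hxs] at hbern ⊢
  field_simp at hbern
  nlinarith

lemma sq_sub_two_mul_le {s u v x y t : ℝ} (hs : 1 ≤ s) (hy : 0 ≤ y) (hyx : y ≤ x)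
    (hv : 0 ≤ v) (hvu : v ≤ u) (ht : t ≤ x * y) (htangent : u * x - v * y ≤ s * u * (x - y)) :
    u ^ 2 * x ^ 2 + v ^ 2 * y ^ 2 - 2 * u * v * t ≤
      s ^ 2 * (u ^ 2 * x ^ 2 + v ^ 2 * y ^ 2 - (u ^ 2 + v ^ 2) * t) := by
  have hu : 0 ≤ u := hv.trans hvu
  have hxy : 0 ≤ x - y := sub_nonneg.2 hyx
  have hA : 0 ≤ u * x - v * y := by nlinarith [mul_le_mul hvu hyx hy hu]
  have hB : 0 ≤ u ^ 2 * x - v ^ 2 * y := by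
    nlinarith [mul_le_mul (pow_le_pow_left₀ hv hvu 2) hyx hy (sq_nonneg u)]
  have hsq : (u * x - v * y) ^ 2 ≤ s * ((x - y) * (u ^ 2 * x - v ^ 2 * y)) :=
    calc (u * x - v * y) ^ 2 ≤ s * u * (x - y) * (u * x - v * y) := by
          nlinarith [mul_le_mul_of_nonneg_right htangent hA]
      _ = s * ((x - y) * (u ^ 2 * x - u * v * y)) := by ring
      _ ≤ s * ((x - y) * (u ^ 2 * x - v ^ 2 * y)) := by
          gcongr
          nlinarith [mul_le_mul_of_nonneg_right hvu (mul_nonneg hv hy)]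
  have hss : 1 ≤ s ^ 2 := one_le_pow₀ hs
  have hcross : 2 * u * v * (x * y - t) ≤ (u ^ 2 + v ^ 2) * (x * y - t) :=
    mul_le_mul_of_nonneg_right (two_mul_le_add_sq u v |>.trans_eq' (by ring))
      (sub_nonneg.2 ht)
  calc u ^ 2 * x ^ 2 + v ^ 2 * y ^ 2 - 2 * u * v * t
      = (u * x - v * y) ^ 2 + 2 * u * v * (x * y - t) := by ring
    _ ≤ s ^ 2 * ((x - y) * (u ^ 2 * x - v ^ 2 * y)) + s ^ 2 * ((u ^ 2 + v ^ 2) * (x * y - t)) := by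
        gcongr ?_ + ?_
        · nlinarith [mul_nonneg hxy hB]
        · nlinarith [mul_nonneg (add_nonneg (sq_nonneg u) (sq_nonneg v)) (sub_nonneg.2 ht)]
    _ = s ^ 2 * (u ^ 2 * x ^ 2 + v ^ 2 * y ^ 2 - (u ^ 2 + v ^ 2) * t) := by ring

variable {E : Type*} [NormedAddCommGroup E] [InnerProductSpace ℝ E]

lemma norm_smul_sub_smul_sq_le {s u v : ℝ} {a b : E} (hs : 1 ≤ s) (hba : ‖b‖ ≤ ‖a‖)
    (hv : 0 ≤ v) (hvu : v ≤ u) (htangent : u * ‖a‖ - v * ‖b‖ ≤ s * u * (‖a‖ - ‖b‖)) :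
    ‖u • a - v • b‖ ^ 2 ≤ s ^ 2 * ⟪u ^ 2 • a - v ^ 2 • b, a - b⟫ := by
  have hu : 0 ≤ u := hv.trans hvu
  have hL : ‖u • a - v • b‖ ^ 2 = u ^ 2 * ‖a‖ ^ 2 + v ^ 2 * ‖b‖ ^ 2 - 2 * u * v * ⟪a, b⟫ := by
    rw [norm_sub_sq_real, norm_smul, norm_smul, real_inner_smul_left, real_inner_smul_right,
      Real.norm_of_nonneg hu, Real.norm_of_nonneg hv]
    ring
  have hR : ⟪u ^ 2 • a - v ^ 2 • b, a - b⟫ =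
      u ^ 2 * ‖a‖ ^ 2 + v ^ 2 * ‖b‖ ^ 2 - (u ^ 2 + v ^ 2) * ⟪a, b⟫ := by
    simp only [inner_sub_left, inner_sub_right, real_inner_smul_left,
      real_inner_self_eq_norm_sq, real_inner_comm b a]
    ring
  rw [hL, hR]
  exact sq_sub_two_mul_le hs (norm_nonneg b) hba hv hvu (real_inner_le_norm a b) htangent

lemma inner_rpow_smul_sub_ge_of_norm_le {p : ℝ} (hp : 2 ≤ p) {a b : E} (hba : ‖b‖ ≤ ‖a‖) :
    4 / p ^ 2 * ‖‖a‖ ^ ((p - 2) / 2) • a - ‖b‖ ^ ((p - 2) / 2) • b‖ ^ 2 ≤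
      ⟪‖a‖ ^ (p - 2) • a - ‖b‖ ^ (p - 2) • b, a - b⟫ := by
  have hsq (x : ℝ) (hx : 0 ≤ x) : (x ^ ((p - 2) / 2)) ^ 2 = x ^ (p - 2) := by
    rw [← rpow_natCast, ← rpow_mul hx]
    norm_num
  have hhalf (x : ℝ) (hx : 0 ≤ x) : x ^ (p / 2) = x ^ ((p - 2) / 2) * x := by
    rw [show p / 2 = (p - 2) / 2 + 1 by ring, rpow_add' hx (by linarith), rpow_one]
  have htangent := rpow_sub_rpow_le_mul_rpow_sub_one (s := p / 2) (by linarith)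
    (norm_nonneg b) hba
  rw [hhalf _ (norm_nonneg a), hhalf _ (norm_nonneg b),
    show p / 2 - 1 = (p - 2) / 2 by ring] at htangent
  have h := norm_smul_sub_smul_sq_le (by linarith) hba (rpow_nonneg (norm_nonneg b) _)
    (rpow_le_rpow (norm_nonneg b) hba (by linarith)) htangent
  rw [hsq _ (norm_nonneg a), hsq _ (norm_nonneg b)] at h
  rw [div_mul_eq_mul_div, div_le_iff₀ (by positivity)]
  linarith

theorem stmt_0 (N : ℕ) (p : ℝ) (hp : 2 ≤ p) (a b : EuclideanSpace ℝ (Fin N)) :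
    (4 / p ^ 2) * ‖‖a‖ ^ ((p - 2) / 2) • a - ‖b‖ ^ ((p - 2) / 2) • b‖ ^ 2 ≤
      (inner ℝ (‖a‖ ^ (p - 2) • a - ‖b‖ ^ (p - 2) • b) (a - b) : ℝ) := by
  rcases le_total ‖b‖ ‖a‖ with hba | hab
  · exact inner_rpow_smul_sub_ge_of_norm_le hp hba
  · have h := inner_rpow_smul_sub_ge_of_norm_le hp hab
    rwa [norm_sub_rev, ← inner_neg_neg, neg_sub, neg_sub] at h
end

section
/- If u : [0,T] → ℝ is continuously differentiable and 0 < α < 1, then the Caputo fractional derivative satisfies (1/2)·D^α(u²)(t) ≤ u(t)·D^α u(t) for all t ∈ (0,T], where D^α u(t) = (1/Γ(1−α))·∫₀ᵗ (t−s)^(−α) u'(s) ds. -/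
/-- The left Caputo fractional derivative of order `α`. -/
noncomputable def caputo (α : ℝ) (u : ℝ → ℝ) (t : ℝ) : ℝ :=
  (1 / Real.Gamma (1 - α)) * ∫ s in (0:ℝ)..t, (t - s) ^ (-α) * deriv u s

/-!
With `w s = u t - u s`, the gap `u t * D^α u t - D^α (u²) t / 2` is `Γ(1-α)⁻¹` times
`∫₀ᵗ (t-s)^(-α) w(s) u'(s) ds`, and `w u' = -(w²)'/2`. We integrate by parts in monotone
form: `Φ b = (t-b)^(-α) w(b)² / 2 + ∫₀ᵇ (t-s)^(-α) w u'` has derivative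
`α (t-b)^(-α-1) w(b)² / 2 ≥ 0`, so the integral `Φ t` is at least `Φ 0 ≥ 0`. The boundary
term extends continuously by `0` at `b = t` since `|w b| ≤ M (t - b)` and `α < 2`.
-/

open Set Filter Topology MeasureTheory intervalIntegral

section

variable {t α : ℝ}

lemma intervalIntegrable_sub_rpow_neg_mul (ht : 0 ≤ t) (hα : α < 1) {f : ℝ → ℝ}
    (hf : ContinuousOn f (Icc 0 t)) :
    IntervalIntegrable (fun s => (t - s) ^ (-α) * f s) volume 0 t := by
  have hkernel : IntervalIntegrable (fun s => (t - s) ^ (-α)) volume 0 t := by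
    simpa using ((intervalIntegrable_rpow' (a := 0) (b := t) (r := -α) (by linarith)).comp_sub_left
      t).symm
  exact hkernel.mul_continuousOn (by rwa [uIcc_of_le ht])

lemma tendsto_sub_rpow_neg_mul_sq (hα : α < 2) {w : ℝ → ℝ} {M : ℝ}
    (hw : ∀ᶠ s in 𝓝[≤] t, |w s| ≤ M * (t - s)) :
    Tendsto (fun s => (t - s) ^ (-α) * w s ^ 2) (𝓝[≤] t) (𝓝 0) := by
  have hbound : Tendsto (fun s => M ^ 2 * (t - s) ^ (2 - α)) (𝓝[≤] t) (𝓝 0) := by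
    have hcont : Continuous (fun s => M ^ 2 * (t - s) ^ (2 - α)) :=
      continuous_const.mul ((continuous_const.sub continuous_id).rpow_const
        fun _ => Or.inr (by linarith))
    simpa [Real.zero_rpow (by linarith : 2 - α ≠ 0)] using
      hcont.continuousWithinAt (s := Iic t) (x := t) |>.tendsto
  refine squeeze_zero' ?_ ?_ hbound
  · filter_upwards [self_mem_nhdsWithin] with s hs
    exact mul_nonneg (Real.rpow_nonneg (sub_nonneg.2 hs) _) (sq_nonneg _)
  · filter_upwards [self_mem_nhdsWithin, hw] with s hs hws
    have hts : 0 ≤ t - s := sub_nonneg.2 hs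
    calc (t - s) ^ (-α) * w s ^ 2 ≤ (t - s) ^ (-α) * (M * (t - s)) ^ 2 := by
          refine mul_le_mul_of_nonneg_left ?_ (Real.rpow_nonneg hts _)
          exact (sq_abs (w s)).symm.trans_le (pow_le_pow_left₀ (abs_nonneg _) hws 2)
      _ = M ^ 2 * ((t - s) ^ (-α) * (t - s) ^ (2 : ℝ)) := by
          rw [Real.rpow_two]; ring
      _ = M ^ 2 * (t - s) ^ (2 - α) := by
          rw [← Real.rpow_add' hts (by linarith)]; ring_nf

lemma continuousOn_sub_rpow_neg_mul_sq {a M : ℝ} (hα : α < 2) {w : ℝ → ℝ}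
    (hw : ContinuousOn w (Icc a t)) (hwt : ∀ s ∈ Icc a t, |w s| ≤ M * (t - s)) :
    ContinuousOn (fun s => (t - s) ^ (-α) * w s ^ 2) (Icc a t) := by
  intro x hx
  rcases hx.2.lt_or_eq with hxt | rfl
  · have hbase : ContinuousAt (fun s => (t - s) ^ (-α)) x :=
      (continuous_const.sub continuous_id).continuousAt.rpow_const (Or.inl (sub_ne_zero.2 hxt.ne'))
    exact hbase.continuousWithinAt.mul ((hw x hx).pow 2)
  · have hw0 : w x = 0 := abs_nonpos_iff.1 (by simpa using hwt x hx)
    rcases hx.1.lt_or_eq with hax | rfl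
    · have hlim := tendsto_sub_rpow_neg_mul_sq hα
        (mem_of_superset (Icc_mem_nhdsLE hax) fun s hs => hwt s hs)
      simpa [ContinuousWithinAt, hw0] using hlim.mono_left (nhdsWithin_mono _ Icc_subset_Iic_self)
    · rw [Icc_self]
      exact continuousWithinAt_singleton

lemma hasDerivAt_sub_rpow_neg_mul_sq_div_two {u : ℝ → ℝ} {f x : ℝ} (hx : x < t)
    (hu : HasDerivAt u f x) :
    HasDerivAt (fun s => (t - s) ^ (-α) * (u t - u s) ^ 2 / 2)
      (α * (t - x) ^ (-α - 1) * (u t - u x) ^ 2 / 2 - (t - x) ^ (-α) * ((u t - u x) * f)) x := by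
  have hk : HasDerivAt (fun s => (t - s) ^ (-α)) (-1 * (-α) * (t - x) ^ (-α - 1)) x :=
    ((hasDerivAt_id x).const_sub t).rpow_const (Or.inl (sub_ne_zero.2 hx.ne'))
  refine ((hk.mul ((hu.const_sub (u t)).fun_pow 2)).div_const 2).congr_deriv ?_
  ring

lemma integral_sub_rpow_neg_mul_sub_mul_nonneg {u f : ℝ → ℝ} (ht : 0 < t) (hα0 : 0 ≤ α)
    (hα1 : α < 1) (hf : ContinuousOn f (Icc 0 t))
    (hu : ∀ s ∈ Icc 0 t, HasDerivWithinAt u (f s) (Icc 0 t) s) :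
    0 ≤ ∫ s in (0:ℝ)..t, (t - s) ^ (-α) * ((u t - u s) * f s) := by
  set g : ℝ → ℝ := fun s => (t - s) ^ (-α) * ((u t - u s) * f s)
  set Φ : ℝ → ℝ := fun b => (t - b) ^ (-α) * (u t - u b) ^ 2 / 2 + ∫ s in (0:ℝ)..b, g s
  have huc : ContinuousOn u (Icc 0 t) := fun s hs => (hu s hs).continuousWithinAt
  have hg : IntervalIntegrable g volume 0 t :=
    intervalIntegrable_sub_rpow_neg_mul ht.le hα1 ((continuousOn_const.sub huc).mul hf)
  obtain ⟨M, hM⟩ := isCompact_Icc.exists_bound_of_continuousOn hf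
  have hlip : ∀ s ∈ Icc 0 t, |u t - u s| ≤ M * (t - s) := fun s hs => by
    simpa [abs_of_nonneg (sub_nonneg.2 hs.2)] using
      (convex_Icc 0 t).norm_image_sub_le_of_norm_hasDerivWithin_le hu hM hs (right_mem_Icc.2 ht.le)
  have hΦc : ContinuousOn Φ (Icc 0 t) := by
    refine ((continuousOn_sub_rpow_neg_mul_sq (by linarith) (continuousOn_const.sub huc)
      hlip).div_const 2).add ?_
    simpa [uIcc_of_le ht.le] using continuousOn_primitive_interval' hg left_mem_uIcc
  have hgc : ContinuousOn g (Ioo 0 t) :=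
    ((continuousOn_const.sub continuousOn_id).rpow_const fun s hs =>
      Or.inl (sub_ne_zero.2 hs.2.ne')).mul
      (((continuousOn_const.sub huc).mul hf).mono Ioo_subset_Icc_self)
  have hmono : MonotoneOn Φ (Icc 0 t) := by
    refine monotoneOn_of_hasDerivWithinAt_nonneg (convex_Icc 0 t) hΦc
      (f' := fun x => α * (t - x) ^ (-α - 1) * (u t - u x) ^ 2 / 2) ?_ ?_ <;> rw [interior_Icc]
    · intro x hx
      have hux : HasDerivAt u (f x) x :=
        (hu x (Ioo_subset_Icc_self hx)).hasDerivAt (Icc_mem_nhds hx.1 hx.2)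
      have hI : HasDerivAt (fun b => ∫ s in (0:ℝ)..b, g s) (g x) x :=
        integral_hasDerivAt_right
          (hg.mono_set (uIcc_subset_uIcc left_mem_uIcc (mem_uIcc_of_le hx.1.le hx.2.le)))
          (hgc.stronglyMeasurableAtFilter isOpen_Ioo x hx)
          (hgc.continuousAt (Ioo_mem_nhds hx.1 hx.2))
      exact (((hasDerivAt_sub_rpow_neg_mul_sq_div_two hx.2 hux).add hI).congr_deriv
        (sub_add_cancel _ _)).hasDerivWithinAt
    · intro x hx
      have := Real.rpow_nonneg (sub_nonneg.2 hx.2.le) (-α - 1)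
      positivity
  have h0t := hmono (left_mem_Icc.2 ht.le) (right_mem_Icc.2 ht.le) ht.le
  have hΦ0 : 0 ≤ Φ 0 := by
    have := Real.rpow_nonneg (sub_nonneg.2 ht.le) (-α)
    simp only [Φ, integral_same, add_zero]
    positivity
  simpa [Φ] using hΦ0.trans h0t

lemma caputo_eq_integral_of_eqOn_deriv {u f : ℝ → ℝ} (ht : 0 ≤ t)
    (h : EqOn (deriv u) f (Ioo 0 t)) :
    caputo α u t = 1 / Real.Gamma (1 - α) * ∫ s in (0:ℝ)..t, (t - s) ^ (-α) * f s := by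
  rw [caputo, integral_congr_Ioo_of_le ht fun s hs => congrArg ((t - s) ^ (-α) * ·) (h hs)]

theorem half_mul_caputo_sq_le {u : ℝ → ℝ} (ht : 0 < t) (hα0 : 0 ≤ α) (hα1 : α < 1)
    (hu : ContDiffOn ℝ 1 u (Icc 0 t)) :
    1 / 2 * caputo α (fun s => u s ^ 2) t ≤ u t * caputo α u t := by
  set f := derivWithin u (Icc 0 t)
  have hf : ContinuousOn f (Icc 0 t) := hu.continuousOn_derivWithin (uniqueDiffOn_Icc ht) le_rfl
  have hderiv : ∀ s ∈ Icc 0 t, HasDerivWithinAt u (f s) (Icc 0 t) s := fun s hs =>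
    (hu.differentiableOn one_ne_zero s hs).hasDerivWithinAt
  have hderiv' : ∀ s ∈ Ioo 0 t, HasDerivAt u (f s) s := fun s hs =>
    (hderiv s (Ioo_subset_Icc_self hs)).hasDerivAt (Icc_mem_nhds hs.1 hs.2)
  rw [caputo_eq_integral_of_eqOn_deriv ht.le fun s hs => (hderiv' s hs).deriv,
    caputo_eq_integral_of_eqOn_deriv ht.le (f := fun s => 2 * (u s * f s)) fun s hs => by
      simpa [mul_assoc] using ((hderiv' s hs).fun_pow 2).deriv]
  have hΓ : 0 ≤ 1 / Real.Gamma (1 - α) :=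
    one_div_nonneg.2 (Real.Gamma_pos_of_pos (by linarith)).le
  have hkf := intervalIntegrable_sub_rpow_neg_mul ht.le hα1 hf
  have hkuf : IntervalIntegrable (fun s => (t - s) ^ (-α) * (2 * (u s * f s))) volume 0 t :=
    intervalIntegrable_sub_rpow_neg_mul ht.le hα1 (continuousOn_const.mul (hu.continuousOn.mul hf))
  have hsplit : ∫ s in (0:ℝ)..t, (t - s) ^ (-α) * ((u t - u s) * f s) =
      u t * (∫ s in (0:ℝ)..t, (t - s) ^ (-α) * f s) -
        1 / 2 * ∫ s in (0:ℝ)..t, (t - s) ^ (-α) * (2 * (u s * f s)) := by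
    rw [← intervalIntegral.integral_const_mul, ← intervalIntegral.integral_const_mul,
      ← intervalIntegral.integral_sub (hkf.const_mul _) (hkuf.const_mul _)]
    exact intervalIntegral.integral_congr fun s _ => by ring
  have hnonneg := integral_sub_rpow_neg_mul_sub_mul_nonneg ht hα0 hα1 hf hderiv
  rw [hsplit] at hnonneg
  linear_combination mul_nonneg hΓ hnonneg

end

theorem stmt_4_general (T α : ℝ) (hα0 : 0 < α) (hα1 : α < 1)
    (u : ℝ → ℝ) (hu : ContDiffOn ℝ 1 u (Set.Icc 0 T)) :
    ∀ t ∈ Set.Ioc (0:ℝ) T,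
      (1 / 2) * caputo α (fun s => u s ^ 2) t ≤ u t * caputo α u t :=
  fun _ ht => half_mul_caputo_sq_le ht.1 hα0.le hα1 (hu.mono (Icc_subset_Icc_right ht.2))

theorem stmt_4 (T α : ℝ) (hT : 0 < T) (hα0 : 0 < α) (hα1 : α < 1)
    (u : ℝ → ℝ) (hu : ContDiffOn ℝ 1 u (Set.Icc 0 T)) :
    ∀ t ∈ Set.Ioc (0:ℝ) T,
      (1 / 2) * caputo α (fun s => u s ^ 2) t ≤ u t * caputo α u t :=
  stmt_4_general T α hα0 hα1 u hu
end

section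
/- Gronwall inequality with Mittag-Leffler bound: let α ∈ (0,1), C ≥ 0, and Φ : [0,T] → ℝ continuous nonnegative with Φ(t) ≤ Φ(0) + (C/Γ(α))·∫₀ᵗ (t−s)^(α−1)·Φ(s) ds for all t ∈ [0,T]. Then Φ(t) ≤ Φ(0)·E_α(C·t^α) for all t ∈ [0,T], where E_α(z) = Σ_{k≥0} z^k/Γ(αk+1). -/
/-!
Picard iteration. Writing `I^α` for the Riemann–Liouville integral, the hypothesis reads
`Φ ≤ Φ(0) + C I^α Φ`, and `C I^α` sends `C^k t^{αk} / Γ(αk+1)` to the next term of the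
Mittag-Leffler series (a Beta integral). Starting from a bound `Φ ≤ M` and iterating `n` times gives
`Φ(t) ≤ Φ(0) ∑_{k<n} (C t^α)^k / Γ(αk+1) + M (C t^α)^n / Γ(αn+1)`; the series converges (ratio
test: `Γ(y) / Γ(y + α) → 0`), so the remainder tends to `0`.
-/

/-- The one-parameter Mittag-Leffler function `E_α(z) = ∑ z^k / Γ(αk + 1)`. -/
noncomputable def mittagLeffler (α z : ℝ) : ℝ :=
  ∑' k : ℕ, z ^ k / Real.Gamma (α * k + 1)

open Real Filter Topology MeasureTheory Set

lemma Real.Gamma_add_one_le_rpow_mul_Gamma_add {α y : ℝ} (hα0 : 0 < α) (hα1 : α < 1)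
    (hy : 0 < y) : Gamma (y + 1) ≤ (y + α) ^ (1 - α) * Gamma (y + α) := by
  have hyα : 0 < y + α := by linarith
  have hΓ := Gamma_pos_of_pos hyα
  -- `y + 1` is a convex combination of `y + α` and `y + α + 1`, and `Γ` is log-convex.
  calc Gamma (y + 1) = Gamma (α * (y + α) + (1 - α) * (y + α + 1)) := by ring_nf
    _ ≤ Gamma (y + α) ^ α * Gamma (y + α + 1) ^ (1 - α) :=
      Gamma_mul_add_mul_le_rpow_Gamma_mul_rpow_Gamma hyα (by linarith) hα0 (by linarith)
        (by ring)
    _ = (y + α) ^ (1 - α) * Gamma (y + α) := by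
      rw [Gamma_add_one hyα.ne', mul_rpow hyα.le hΓ.le, mul_left_comm, ← rpow_add hΓ,
        add_sub_cancel, rpow_one]

lemma Real.Gamma_div_Gamma_add_le {α y : ℝ} (hα0 : 0 < α) (hα1 : α < 1) (hy : 1 ≤ y) :
    Gamma y / Gamma (y + α) ≤ 2 * y ^ (-α) := by
  have hy0 : 0 < y := by linarith
  have hΓα := Gamma_pos_of_pos (by linarith : 0 < y + α)
  have key := Gamma_add_one_le_rpow_mul_Gamma_add hα0 hα1 hy0
  rw [Gamma_add_one hy0.ne'] at key
  have hpow : (y + α) ^ (1 - α) ≤ 2 * y ^ (1 - α) :=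
    calc (y + α) ^ (1 - α) ≤ (2 * y) ^ (1 - α) := by gcongr; linarith
      _ = 2 ^ (1 - α) * y ^ (1 - α) := mul_rpow (by norm_num) hy0.le
      _ ≤ 2 * y ^ (1 - α) := by
        gcongr
        exact rpow_le_self_of_one_le (by norm_num) (by linarith)
  rw [div_le_iff₀ hΓα]
  have : y ^ (1 - α) = y ^ (-α) * y := by rw [← rpow_add_one hy0.ne']; ring_nf
  nlinarith [rpow_pos_of_pos hy0 (-α)]

lemma Real.tendsto_Gamma_div_Gamma_add_atTop {α : ℝ} (hα : 0 < α) :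
    Tendsto (fun y => Gamma y / Gamma (y + α)) atTop (𝓝 0) := by
  have hnonneg : ∀ᶠ y : ℝ in atTop, 0 ≤ Gamma y / Gamma (y + α) := by
    filter_upwards [eventually_gt_atTop 0] with y hy
    exact div_nonneg (Gamma_pos_of_pos hy).le (Gamma_pos_of_pos (by linarith)).le
  rcases lt_or_ge α 1 with hα1 | hα1
  · refine tendsto_of_tendsto_of_tendsto_of_le_of_le' tendsto_const_nhds
      (by simpa using (tendsto_rpow_neg_atTop hα).const_mul 2) hnonneg ?_
    filter_upwards [eventually_ge_atTop 1] with y hy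
    exact Gamma_div_Gamma_add_le hα hα1 hy
  · refine tendsto_of_tendsto_of_tendsto_of_le_of_le' tendsto_const_nhds
      tendsto_inv_atTop_zero hnonneg ?_
    filter_upwards [eventually_ge_atTop 1] with y hy
    have hy0 : 0 < y := by linarith
    have hmono : Gamma (y + 1) ≤ Gamma (y + α) :=
      Gamma_strictMonoOn_Ici.monotoneOn (by simp; linarith) (by simp; linarith) (by linarith)
    rw [Gamma_add_one hy0.ne'] at hmono
    rw [div_le_iff₀ (by positivity), inv_mul_eq_div, le_div_iff₀ hy0]
    linarith

lemma summable_pow_div_Gamma {α : ℝ} (hα : 0 < α) (x : ℝ) :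
    Summable (fun k : ℕ => x ^ k / Gamma (α * k + 1)) := by
  rcases eq_or_ne x 0 with rfl | hx
  · refine summable_of_ne_finset_zero (s := {0}) fun k hk => ?_
    simp [zero_pow (by simpa using hk)]
  have hΓ : ∀ k : ℕ, 0 < Gamma (α * k + 1) := fun k => Gamma_pos_of_pos (by positivity)
  refine summable_of_ratio_test_tendsto_lt_one zero_lt_one
    (Eventually.of_forall fun k => div_ne_zero (pow_ne_zero k hx) (hΓ k).ne') ?_
  have hlin : Tendsto (fun k : ℕ => α * k + 1) atTop atTop :=
    tendsto_atTop_add_const_right _ 1 (tendsto_natCast_atTop_atTop.const_mul_atTop hα)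
  convert ((tendsto_Gamma_div_Gamma_add_atTop hα).comp hlin).const_mul |x| using 2 with k
  · simp only [norm_div, norm_pow, Real.norm_eq_abs, abs_of_pos (hΓ _), Function.comp_apply,
      pow_succ, abs_mul, abs_pow]
    push_cast
    field_simp
    ring_nf
  · simp

lemma integral_rpow_mul_sub_rpow {p q a : ℝ} (hp : 0 < p) (hq : 0 < q) (ha : 0 < a) :
    ∫ x in (0 : ℝ)..a, x ^ (p - 1) * (a - x) ^ (q - 1)
      = Gamma p * Gamma q / Gamma (p + q) * a ^ (p + q - 1) := by
  apply Complex.ofReal_injective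
  have hbeta := Complex.betaIntegral_scaled p q ha
  rw [Complex.betaIntegral_eq_Gamma_mul_div _ _ (by simpa) (by simpa)] at hbeta
  rw [← intervalIntegral.integral_ofReal]
  have hcongr : ∫ x in (0 : ℝ)..a, ((x ^ (p - 1) * (a - x) ^ (q - 1) : ℝ) : ℂ)
      = ∫ x in (0 : ℝ)..a, (x : ℂ) ^ ((p : ℂ) - 1) * ((a : ℂ) - x) ^ ((q : ℂ) - 1) := by
    refine intervalIntegral.integral_congr fun x hx => ?_
    rw [uIcc_of_le ha.le] at hx
    push_cast [Complex.ofReal_cpow hx.1, Complex.ofReal_cpow (sub_nonneg.2 hx.2)]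
    rfl
  rw [hcongr, hbeta, ← Complex.ofReal_add, Complex.Gamma_ofReal, Complex.Gamma_ofReal,
    Complex.Gamma_ofReal, ← Complex.ofReal_one, ← Complex.ofReal_sub, ← Complex.ofReal_cpow ha.le]
  push_cast
  ring

noncomputable def riemannLiouville (α : ℝ) (g : ℝ → ℝ) (t : ℝ) : ℝ :=
  (Gamma α)⁻¹ * ∫ s in (0 : ℝ)..t, (t - s) ^ (α - 1) * g s

section RiemannLiouville

variable {α t : ℝ} {g h : ℝ → ℝ}

lemma intervalIntegrable_sub_rpow_mul (hα : 0 < α) (ht : 0 ≤ t)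
    (hg : ContinuousOn g (Icc 0 t)) :
    IntervalIntegrable (fun s => (t - s) ^ (α - 1) * g s) volume 0 t := by
  have hkernel : IntervalIntegrable (fun s => (t - s) ^ (α - 1)) volume 0 t := by
    simpa using (intervalIntegral.intervalIntegrable_rpow' (a := t) (b := 0)
      (by linarith : -1 < α - 1)).comp_sub_left t
  exact hkernel.mul_continuousOn (by rwa [uIcc_of_le ht])

lemma riemannLiouville_mono (hα : 0 < α) (ht : 0 ≤ t) (hg : ContinuousOn g (Icc 0 t))
    (hh : ContinuousOn h (Icc 0 t)) (hgh : ∀ s ∈ Icc 0 t, g s ≤ h s) :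
    riemannLiouville α g t ≤ riemannLiouville α h t := by
  refine mul_le_mul_of_nonneg_left (intervalIntegral.integral_mono_on ht
    (intervalIntegrable_sub_rpow_mul hα ht hg) (intervalIntegrable_sub_rpow_mul hα ht hh)
    fun s hs => ?_) (inv_nonneg.2 (Gamma_pos_of_pos hα).le)
  exact mul_le_mul_of_nonneg_left (hgh s hs) (rpow_nonneg (sub_nonneg.2 hs.2) _)

lemma riemannLiouville_const_mul (c : ℝ) :
    riemannLiouville α (fun s => c * g s) t = c * riemannLiouville α g t := by
  simp only [riemannLiouville, mul_left_comm _ c, intervalIntegral.integral_const_mul]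

lemma riemannLiouville_add (hα : 0 < α) (ht : 0 ≤ t) (hg : ContinuousOn g (Icc 0 t))
    (hh : ContinuousOn h (Icc 0 t)) :
    riemannLiouville α (fun s => g s + h s) t
      = riemannLiouville α g t + riemannLiouville α h t := by
  simp only [riemannLiouville, ← mul_add, ← intervalIntegral.integral_add
    (intervalIntegrable_sub_rpow_mul hα ht hg) (intervalIntegrable_sub_rpow_mul hα ht hh)]

lemma riemannLiouville_finsetSum {ι : Type*} (s : Finset ι) {f : ι → ℝ → ℝ} (hα : 0 < α)
    (ht : 0 ≤ t) (hf : ∀ i ∈ s, ContinuousOn (f i) (Icc 0 t)) :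
    riemannLiouville α (fun x => ∑ i ∈ s, f i x) t = ∑ i ∈ s, riemannLiouville α (f i) t := by
  simp only [riemannLiouville, Finset.mul_sum]
  rw [intervalIntegral.integral_finsetSum fun i hi =>
    intervalIntegrable_sub_rpow_mul hα ht (hf i hi), Finset.mul_sum]

lemma riemannLiouville_rpow (hα : 0 < α) {β : ℝ} (hβ : 0 ≤ β) (ht : 0 ≤ t) :
    riemannLiouville α (fun s => s ^ β) t = Gamma (β + 1) / Gamma (β + 1 + α) * t ^ (β + α) := by
  rcases ht.eq_or_lt with rfl | ht
  · simp [riemannLiouville, zero_rpow (by linarith : β + α ≠ 0)]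
  rw [riemannLiouville, intervalIntegral.integral_congr
      (g := fun s => s ^ (β + 1 - 1) * (t - s) ^ (α - 1)) fun s _ => by
        simp only [add_sub_cancel_right, mul_comm],
    integral_rpow_mul_sub_rpow (by linarith) hα ht]
  field_simp
  ring_nf

end RiemannLiouville

noncomputable def mittagLefflerTerm (α C : ℝ) (k : ℕ) (t : ℝ) : ℝ :=
  C ^ k / Gamma (α * k + 1) * t ^ (α * k)

section MittagLefflerTerm

variable {α C t : ℝ}

@[simp]
lemma mittagLefflerTerm_zero : mittagLefflerTerm α C 0 t = 1 := by
  simp [mittagLefflerTerm]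

lemma continuous_mittagLefflerTerm (hα : 0 ≤ α) (k : ℕ) :
    Continuous (mittagLefflerTerm α C k) :=
  continuous_const.mul (continuous_rpow_const (by positivity))

lemma mul_riemannLiouville_mittagLefflerTerm (hα : 0 < α) (ht : 0 ≤ t) (k : ℕ) :
    C * riemannLiouville α (mittagLefflerTerm α C k) t = mittagLefflerTerm α C (k + 1) t := by
  unfold mittagLefflerTerm
  rw [riemannLiouville_const_mul, riemannLiouville_rpow hα (by positivity) ht]
  push_cast
  field_simp
  ring_nf

lemma hasSum_mittagLefflerTerm (hα : 0 < α) (ht : 0 ≤ t) :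
    HasSum (fun k => mittagLefflerTerm α C k t) (mittagLeffler α (C * t ^ α)) := by
  rw [mittagLeffler]
  convert (summable_pow_div_Gamma hα (C * t ^ α)).hasSum using 2 with k
  rw [mittagLefflerTerm, mul_pow, ← rpow_mul_natCast ht]
  ring

end MittagLefflerTerm

section Gronwall

variable {α C T a M : ℝ} {Φ : ℝ → ℝ}

lemma gronwall_mittagLeffler_iterate (hα : 0 < α) (hC : 0 ≤ C)
    (hcont : ContinuousOn Φ (Icc 0 T))
    (hineq : ∀ t ∈ Icc 0 T, Φ t ≤ a + C * riemannLiouville α Φ t)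
    (hM : ∀ t ∈ Icc 0 T, Φ t ≤ M) (n : ℕ) :
    ∀ t ∈ Icc 0 T,
      Φ t ≤ a * ∑ k ∈ Finset.range n, mittagLefflerTerm α C k t
        + M * mittagLefflerTerm α C n t := by
  induction n with
  | zero => simpa using hM
  | succ n ih =>
    intro t ht
    have hterm : ∀ k, ContinuousOn (mittagLefflerTerm α C k) (Icc 0 t) :=
      fun k => (continuous_mittagLefflerTerm hα.le k).continuousOn
    have hsum : ContinuousOn (fun s => a * ∑ k ∈ Finset.range n, mittagLefflerTerm α C k s)
        (Icc 0 t) :=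
      continuousOn_const.mul (continuousOn_finsetSum _ fun k _ => hterm k)
    have hlast : ContinuousOn (fun s => M * mittagLefflerTerm α C n s) (Icc 0 t) :=
      continuousOn_const.mul (hterm n)
    have hbound : riemannLiouville α Φ t ≤ riemannLiouville α
        (fun s => a * ∑ k ∈ Finset.range n, mittagLefflerTerm α C k s
          + M * mittagLefflerTerm α C n s) t :=
      riemannLiouville_mono hα ht.1 (hcont.mono (Icc_subset_Icc_right ht.2))
        (hsum.add hlast)
        fun s hs => ih s ⟨hs.1, hs.2.trans ht.2⟩
    rw [riemannLiouville_add hα ht.1 hsum hlast,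
      riemannLiouville_const_mul, riemannLiouville_const_mul,
      riemannLiouville_finsetSum _ hα ht.1 fun k _ => hterm k] at hbound
    calc Φ t ≤ a + C * riemannLiouville α Φ t := hineq t ht
      _ ≤ a + C * (a * ∑ k ∈ Finset.range n, riemannLiouville α (mittagLefflerTerm α C k) t
          + M * riemannLiouville α (mittagLefflerTerm α C n) t) := by gcongr
      _ = a * ∑ k ∈ Finset.range (n + 1), mittagLefflerTerm α C k t
          + M * mittagLefflerTerm α C (n + 1) t := by
        simp only [Finset.sum_range_succ', mittagLefflerTerm_zero,
          ← mul_riemannLiouville_mittagLefflerTerm hα ht.1, ← Finset.mul_sum]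
        ring

theorem gronwall_mittagLeffler (hα : 0 < α) (hC : 0 ≤ C) (hcont : ContinuousOn Φ (Icc 0 T))
    (hineq : ∀ t ∈ Icc 0 T, Φ t ≤ a + C * riemannLiouville α Φ t) :
    ∀ t ∈ Icc 0 T, Φ t ≤ a * mittagLeffler α (C * t ^ α) := by
  obtain ⟨M, hM⟩ := isCompact_Icc.bddAbove_image hcont
  intro t ht
  have hsum := hasSum_mittagLefflerTerm (C := C) hα ht.1
  have hlim := (hsum.tendsto_sum_nat.const_mul a).add (hsum.summable.tendsto_atTop_zero.const_mul M)
  rw [mul_zero, add_zero] at hlim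
  exact ge_of_tendsto' hlim fun n => gronwall_mittagLeffler_iterate hα hC hcont hineq
    (fun s hs => hM (mem_image_of_mem Φ hs)) n t ht

end Gronwall

theorem stmt_12_general (T α C : ℝ) (hα0 : 0 < α) (hC : 0 ≤ C)
    (Φ : ℝ → ℝ) (hcont : ContinuousOn Φ (Set.Icc 0 T))
    (hineq : ∀ t ∈ Set.Icc (0:ℝ) T,
      Φ t ≤ Φ 0 + (C / Real.Gamma α) * ∫ s in (0:ℝ)..t, (t - s) ^ (α - 1) * Φ s) :
    ∀ t ∈ Set.Icc (0:ℝ) T, Φ t ≤ Φ 0 * mittagLeffler α (C * t ^ α) :=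
  gronwall_mittagLeffler hα0 hC hcont fun t ht => by
    simpa only [riemannLiouville, div_eq_mul_inv, mul_assoc] using hineq t ht

theorem stmt_12 (T α C : ℝ) (hT : 0 < T) (hα0 : 0 < α) (hα1 : α < 1) (hC : 0 ≤ C)
    (Φ : ℝ → ℝ) (hcont : ContinuousOn Φ (Set.Icc 0 T))
    (hnonneg : ∀ t ∈ Set.Icc (0:ℝ) T, 0 ≤ Φ t)
    (hineq : ∀ t ∈ Set.Icc (0:ℝ) T,
      Φ t ≤ Φ 0 + (C / Real.Gamma α) * ∫ s in (0:ℝ)..t, (t - s) ^ (α - 1) * Φ s) :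
    ∀ t ∈ Set.Icc (0:ℝ) T, Φ t ≤ Φ 0 * mittagLeffler α (C * t ^ α) :=
  stmt_12_general T α C hα0 hC Φ hcont hineq
end
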